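/- arXiv:quant-ph/0205100 — 6 statements merged into one kernel-verified Lean document; each statement's English description precedes it below -/
import Mathlib

section
/- For all matrices U, V in SU(2), every entry of the 4×4 matrix M† · (U ⊗ V) · M is real; consequently M† (U ⊗ V) M is a real orthogonal matrix. -/
open Matrix Complex Real NormedSpace

noncomputable section

/-- Pauli matrix `σ₁`. -/
def σ1 : Matrix (Fin 2) (Fin 2) ℂ := !![0, 1; 1, 0]
/-- Pauli matrix `σ₂`. -/
def σ2 : Matrix (Fin 2) (Fin 2) ℂ := !![0, -I; I, 0]
/-- Pauli matrix `σ₃`. -/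
def σ3 : Matrix (Fin 2) (Fin 2) ℂ := !![1, 0; 0, -1]

/-- Kronecker product of two `2×2` matrices as a `4×4` matrix, with the index ordering
`|00⟩,|01⟩,|10⟩,|11⟩` (i.e. index `2*i+j` corresponds to `|i⟩⊗|j⟩`). -/
def kron (A B : Matrix (Fin 2) (Fin 2) ℂ) : Matrix (Fin 4) (Fin 4) ℂ :=
  Matrix.of fun i j =>
    A ⟨i.val / 2, by have := i.isLt; omega⟩ ⟨j.val / 2, by have := j.isLt; omega⟩ *
      B ⟨i.val % 2, by have := i.isLt; omega⟩ ⟨j.val % 2, by have := j.isLt; omega⟩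

/-- The Hamiltonian `H_α = α₁ σ₁⊗σ₁ + α₂ σ₂⊗σ₂ + α₃ σ₃⊗σ₃`. -/
def Hmat (a : Fin 3 → ℝ) : Matrix (Fin 4) (Fin 4) ℂ :=
  (a 0 : ℂ) • kron σ1 σ1 + (a 1 : ℂ) • kron σ2 σ2 + (a 2 : ℂ) • kron σ3 σ3

/-- The magic basis matrix: column `j` is the `j`-th magic basis vector, written in the
computational basis `|00⟩,|01⟩,|10⟩,|11⟩`. -/
def Mmag : Matrix (Fin 4) (Fin 4) ℂ :=
  !![0,                      1 / (Real.sqrt 2 : ℂ), -I / (Real.sqrt 2 : ℂ), 0;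
     -I / (Real.sqrt 2 : ℂ), 0,                     0,                      1 / (Real.sqrt 2 : ℂ);
     -I / (Real.sqrt 2 : ℂ), 0,                     0,                      -(1 / (Real.sqrt 2 : ℂ));
     0,                      1 / (Real.sqrt 2 : ℂ), I / (Real.sqrt 2 : ℂ),  0]

/-- `λ(α) = (α₁+α₂−α₃, α₁−α₂+α₃, −α₁+α₂+α₃, −α₁−α₂−α₃)`, the vector of eigenvalues of `H_α`
in the magic basis. -/
def lamv (a : Fin 3 → ℝ) : Fin 4 → ℝ :=
  ![a 0 + a 1 - a 2, a 0 - a 1 + a 2, -a 0 + a 1 + a 2, -a 0 - a 1 - a 2]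

set_option maxHeartbeats 2000000

lemma mul_fin_four' {α : Type*} [NonUnitalNonAssocSemiring α]
    (a₁₁ a₁₂ a₁₃ a₁₄ a₂₁ a₂₂ a₂₃ a₂₄ a₃₁ a₃₂ a₃₃ a₃₄ a₄₁ a₄₂ a₄₃ a₄₄
     b₁₁ b₁₂ b₁₃ b₁₄ b₂₁ b₂₂ b₂₃ b₂₄ b₃₁ b₃₂ b₃₃ b₃₄ b₄₁ b₄₂ b₄₃ b₄₄ : α) :
    !![a₁₁, a₁₂, a₁₃, a₁₄; a₂₁, a₂₂, a₂₃, a₂₄; a₃₁, a₃₂, a₃₃, a₃₄; a₄₁, a₄₂, a₄₃, a₄₄] *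
      !![b₁₁, b₁₂, b₁₃, b₁₄; b₂₁, b₂₂, b₂₃, b₂₄; b₃₁, b₃₂, b₃₃, b₃₄; b₄₁, b₄₂, b₄₃, b₄₄] =
    !![a₁₁*b₁₁ + a₁₂*b₂₁ + a₁₃*b₃₁ + a₁₄*b₄₁, a₁₁*b₁₂ + a₁₂*b₂₂ + a₁₃*b₃₂ + a₁₄*b₄₂,
       a₁₁*b₁₃ + a₁₂*b₂₃ + a₁₃*b₃₃ + a₁₄*b₄₃, a₁₁*b₁₄ + a₁₂*b₂₄ + a₁₃*b₃₄ + a₁₄*b₄₄;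
       a₂₁*b₁₁ + a₂₂*b₂₁ + a₂₃*b₃₁ + a₂₄*b₄₁, a₂₁*b₁₂ + a₂₂*b₂₂ + a₂₃*b₃₂ + a₂₄*b₄₂,
       a₂₁*b₁₃ + a₂₂*b₂₃ + a₂₃*b₃₃ + a₂₄*b₄₃, a₂₁*b₁₄ + a₂₂*b₂₄ + a₂₃*b₃₄ + a₂₄*b₄₄;
       a₃₁*b₁₁ + a₃₂*b₂₁ + a₃₃*b₃₁ + a₃₄*b₄₁, a₃₁*b₁₂ + a₃₂*b₂₂ + a₃₃*b₃₂ + a₃₄*b₄₂,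
       a₃₁*b₁₃ + a₃₂*b₂₃ + a₃₃*b₃₃ + a₃₄*b₄₃, a₃₁*b₁₄ + a₃₂*b₂₄ + a₃₃*b₃₄ + a₃₄*b₄₄;
       a₄₁*b₁₁ + a₄₂*b₂₁ + a₄₃*b₃₁ + a₄₄*b₄₁, a₄₁*b₁₂ + a₄₂*b₂₂ + a₄₃*b₃₂ + a₄₄*b₄₂,
       a₄₁*b₁₃ + a₄₂*b₂₃ + a₄₃*b₃₃ + a₄₄*b₄₃, a₄₁*b₁₄ + a₄₂*b₂₄ + a₄₃*b₃₄ + a₄₄*b₄₄] := by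
  ext i j
  fin_cases i <;> fin_cases j <;> simp [Matrix.mul_apply, Fin.sum_univ_four]

lemma kron_eq (A B : Matrix (Fin 2) (Fin 2) ℂ) : kron A B =
    !![A 0 0 * B 0 0, A 0 0 * B 0 1, A 0 1 * B 0 0, A 0 1 * B 0 1;
       A 0 0 * B 1 0, A 0 0 * B 1 1, A 0 1 * B 1 0, A 0 1 * B 1 1;
       A 1 0 * B 0 0, A 1 0 * B 0 1, A 1 1 * B 0 0, A 1 1 * B 0 1;
       A 1 0 * B 1 0, A 1 0 * B 1 1, A 1 1 * B 1 0, A 1 1 * B 1 1] := by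
  ext i j; fin_cases i <;> fin_cases j <;> rfl

lemma Mmag_conjTranspose : Mmagᴴ =
    !![0, I / (Real.sqrt 2 : ℂ), I / (Real.sqrt 2 : ℂ), 0;
       1 / (Real.sqrt 2 : ℂ), 0, 0, 1 / (Real.sqrt 2 : ℂ);
       I / (Real.sqrt 2 : ℂ), 0, 0, -(I / (Real.sqrt 2 : ℂ));
       0, 1 / (Real.sqrt 2 : ℂ), -(1 / (Real.sqrt 2 : ℂ)), 0] := by
  ext i j
  fin_cases i <;> fin_cases j <;>
    simp [Mmag, Matrix.conjTranspose_apply, Complex.conj_ofReal, map_div₀, neg_div]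

lemma sqrt_two_sq : ((Real.sqrt 2 : ℝ) : ℂ) * ((Real.sqrt 2 : ℝ) : ℂ) = 2 := by
  rw [← Complex.ofReal_mul, Real.mul_self_sqrt (by norm_num)]
  norm_num

lemma Mmag_unitary : Mmagᴴ * Mmag = 1 := by
  rw [Mmag_conjTranspose]
  rw [show Mmag = !![0, 1 / (Real.sqrt 2 : ℂ), -I / (Real.sqrt 2 : ℂ), 0;
     -I / (Real.sqrt 2 : ℂ), 0, 0, 1 / (Real.sqrt 2 : ℂ);
     -I / (Real.sqrt 2 : ℂ), 0, 0, -(1 / (Real.sqrt 2 : ℂ));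
     0, 1 / (Real.sqrt 2 : ℂ), I / (Real.sqrt 2 : ℂ), 0] from rfl]
  rw [mul_fin_four']
  have h2 := sqrt_two_sq
  have hne : ((Real.sqrt 2 : ℝ) : ℂ) ≠ 0 := by
    intro h
    rw [h, mul_zero] at h2
    norm_num at h2
  ext i j
  fin_cases i <;> fin_cases j <;> simp [Matrix.one_apply, Matrix.vecHead, Matrix.vecTail]
  all_goals try field_simp
  all_goals try ring_nf
  all_goals try simp [sq, h2, Complex.I_sq]

lemma kron_conjTranspose (A B : Matrix (Fin 2) (Fin 2) ℂ) :
    (kron A B)ᴴ = kron Aᴴ Bᴴ := by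
  rw [kron_eq, kron_eq]
  ext i j
  fin_cases i <;> fin_cases j <;>
    simp [Matrix.conjTranspose_apply, Matrix.vecHead, Matrix.vecTail, mul_comm]

lemma kron_mul (A B C D : Matrix (Fin 2) (Fin 2) ℂ) :
    kron A B * kron C D = kron (A * C) (B * D) := by
  rw [kron_eq A B, kron_eq C D, mul_fin_four', kron_eq]
  ext i j
  fin_cases i <;> fin_cases j <;>
    · simp [Matrix.mul_apply, Fin.sum_univ_two, Matrix.vecHead, Matrix.vecTail]
      ring

lemma kron_one : kron 1 1 = (1 : Matrix (Fin 4) (Fin 4) ℂ) := by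
  rw [kron_eq]
  ext i j
  fin_cases i <;> fin_cases j <;>
    simp [Matrix.one_apply, Matrix.vecHead, Matrix.vecTail]

lemma su2_conjTranspose_eq_adjugate (U : Matrix (Fin 2) (Fin 2) ℂ)
    (hU : U ∈ Matrix.specialUnitaryGroup (Fin 2) ℂ) : Uᴴ = U.adjugate := by
  obtain ⟨h1, h2⟩ := Matrix.mem_specialUnitaryGroup_iff.mp hU
  have h3 : Uᴴ * U = 1 := by
    have := Matrix.mem_unitaryGroup_iff'.mp h1
    simpa [Matrix.star_eq_conjTranspose] using this
  calc Uᴴ = Uᴴ * (U * U.adjugate) := by rw [Matrix.mul_adjugate, h2, one_smul, mul_one]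
  _ = (Uᴴ * U) * U.adjugate := by rw [mul_assoc]
  _ = U.adjugate := by rw [h3, one_mul]

theorem stmt5 (U V : Matrix (Fin 2) (Fin 2) ℂ)
    (hU : U ∈ Matrix.specialUnitaryGroup (Fin 2) ℂ)
    (hV : V ∈ Matrix.specialUnitaryGroup (Fin 2) ℂ) :
    (∀ i j : Fin 4, ((Mmagᴴ * kron U V * Mmag) i j).im = 0) ∧
    ∃ O : Matrix (Fin 4) (Fin 4) ℝ,
      O ∈ Matrix.orthogonalGroup (Fin 4) ℝ ∧
      Mmagᴴ * kron U V * Mmag = O.map ((↑) : ℝ → ℂ) := by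
  -- entrywise conjugation relations from `Uᴴ = adjugate U`
  have hUadj := su2_conjTranspose_eq_adjugate U hU
  have hVadj := su2_conjTranspose_eq_adjugate V hV
  rw [Matrix.adjugate_fin_two] at hUadj hVadj
  have hu00 : (starRingEnd ℂ) (U 0 0) = U 1 1 := by
    have := congr_fun (congr_fun hUadj 0) 0; simpa [Matrix.conjTranspose_apply] using this
  have hu10 : (starRingEnd ℂ) (U 1 0) = -U 0 1 := by
    have := congr_fun (congr_fun hUadj 0) 1; simpa [Matrix.conjTranspose_apply] using this
  have hu01 : (starRingEnd ℂ) (U 0 1) = -U 1 0 := by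
    have := congr_fun (congr_fun hUadj 1) 0; simpa [Matrix.conjTranspose_apply] using this
  have hu11 : (starRingEnd ℂ) (U 1 1) = U 0 0 := by
    have := congr_fun (congr_fun hUadj 1) 1; simpa [Matrix.conjTranspose_apply] using this
  have hv00 : (starRingEnd ℂ) (V 0 0) = V 1 1 := by
    have := congr_fun (congr_fun hVadj 0) 0; simpa [Matrix.conjTranspose_apply] using this
  have hv10 : (starRingEnd ℂ) (V 1 0) = -V 0 1 := by
    have := congr_fun (congr_fun hVadj 0) 1; simpa [Matrix.conjTranspose_apply] using this
  have hv01 : (starRingEnd ℂ) (V 0 1) = -V 1 0 := by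
    have := congr_fun (congr_fun hVadj 1) 0; simpa [Matrix.conjTranspose_apply] using this
  have hv11 : (starRingEnd ℂ) (V 1 1) = V 0 0 := by
    have := congr_fun (congr_fun hVadj 1) 1; simpa [Matrix.conjTranspose_apply] using this
  set A := Mmagᴴ * kron U V * Mmag with hA
  -- Part 1: each entry of A is fixed by conjugation
  have hconj : ∀ i j : Fin 4, (starRingEnd ℂ) (A i j) = A i j := by
    have hexp : A = !![0, I / (Real.sqrt 2 : ℂ), I / (Real.sqrt 2 : ℂ), 0;
       1 / (Real.sqrt 2 : ℂ), 0, 0, 1 / (Real.sqrt 2 : ℂ);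
       I / (Real.sqrt 2 : ℂ), 0, 0, -(I / (Real.sqrt 2 : ℂ));
       0, 1 / (Real.sqrt 2 : ℂ), -(1 / (Real.sqrt 2 : ℂ)), 0] *
      !![U 0 0 * V 0 0, U 0 0 * V 0 1, U 0 1 * V 0 0, U 0 1 * V 0 1;
       U 0 0 * V 1 0, U 0 0 * V 1 1, U 0 1 * V 1 0, U 0 1 * V 1 1;
       U 1 0 * V 0 0, U 1 0 * V 0 1, U 1 1 * V 0 0, U 1 1 * V 0 1;
       U 1 0 * V 1 0, U 1 0 * V 1 1, U 1 1 * V 1 0, U 1 1 * V 1 1] * Mmag := by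
      rw [hA, Mmag_conjTranspose, kron_eq]
    intro i j
    rw [hexp, mul_fin_four',
      show Mmag = !![0, 1 / (Real.sqrt 2 : ℂ), -I / (Real.sqrt 2 : ℂ), 0;
        -I / (Real.sqrt 2 : ℂ), 0, 0, 1 / (Real.sqrt 2 : ℂ);
        -I / (Real.sqrt 2 : ℂ), 0, 0, -(1 / (Real.sqrt 2 : ℂ));
        0, 1 / (Real.sqrt 2 : ℂ), I / (Real.sqrt 2 : ℂ), 0] from rfl, mul_fin_four']
    fin_cases i <;> fin_cases j <;>
      · simp [Matrix.vecHead, Matrix.vecTail, map_div₀, Complex.conj_ofReal,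
          hu00, hu01, hu10, hu11, hv00, hv01, hv10, hv11]
        ring
  have him : ∀ i j : Fin 4, (A i j).im = 0 := fun i j =>
    Complex.conj_eq_iff_im.mp (hconj i j)
  refine ⟨him, ?_⟩
  -- Part 2
  have hre : ∀ i j : Fin 4, (((A i j).re : ℝ) : ℂ) = A i j := fun i j =>
    Complex.ext (by simp) (by simp [him i j])
  have hUu : Uᴴ * U = 1 := by
    have := Matrix.mem_unitaryGroup_iff'.mp (Matrix.mem_specialUnitaryGroup_iff.mp hU).1
    simpa [Matrix.star_eq_conjTranspose] using this
  have hVu : Vᴴ * V = 1 := by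
    have := Matrix.mem_unitaryGroup_iff'.mp (Matrix.mem_specialUnitaryGroup_iff.mp hV).1
    simpa [Matrix.star_eq_conjTranspose] using this
  have hXunit : (kron U V)ᴴ * kron U V = 1 := by
    rw [kron_conjTranspose, kron_mul, hUu, hVu, kron_one]
  have hMM : Mmag * Mmagᴴ = 1 := mul_eq_one_comm.mp Mmag_unitary
  have hAunit : Aᴴ * A = 1 := by
    rw [hA]
    calc (Mmagᴴ * kron U V * Mmag)ᴴ * (Mmagᴴ * kron U V * Mmag)
        = Mmagᴴ * (kron U V)ᴴ * (Mmag * Mmagᴴ) * kron U V * Mmag := by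
          simp [Matrix.conjTranspose_mul, Matrix.mul_assoc]
    _ = Mmagᴴ * ((kron U V)ᴴ * kron U V) * Mmag := by rw [hMM]; simp [Matrix.mul_assoc]
    _ = 1 := by rw [hXunit, mul_one, Mmag_unitary]
  refine ⟨Matrix.of fun i j => (A i j).re, ?_, ?_⟩
  · rw [Matrix.mem_orthogonalGroup_iff']
    have hmap : (Matrix.of fun i j => (A i j).re).map ((↑) : ℝ → ℂ) = A := by
      ext i j
      simpa [Matrix.map_apply] using hre i j
    have key : (star (Matrix.of fun i j => (A i j).re) *
        (Matrix.of fun i j => (A i j).re)).map ((↑) : ℝ → ℂ) = 1 := by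
      have : ∀ (P Q : Matrix (Fin 4) (Fin 4) ℝ),
          (P * Q).map ((↑) : ℝ → ℂ) = P.map ((↑) : ℝ → ℂ) * Q.map ((↑) : ℝ → ℂ) := by
        intro P Q
        exact Matrix.map_mul (f := Complex.ofRealHom)
      rw [this]
      have hstar : (star (Matrix.of fun i j => (A i j).re)).map ((↑) : ℝ → ℂ) = Aᴴ := by
        ext i j
        simp only [Matrix.map_apply, Matrix.star_apply, Matrix.conjTranspose_apply,
          Matrix.of_apply, star_trivial]
        rw [← hconj j i, ← hre j i, Complex.conj_ofReal]
        simp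
      rw [hstar, hmap, hAunit]
    ext i j
    have := congr_fun (congr_fun key i) j
    simp only [Matrix.map_apply] at this
    have h1 : ((1 : Matrix (Fin 4) (Fin 4) ℂ)) i j = (((1 : Matrix (Fin 4) (Fin 4) ℝ) i j : ℝ) : ℂ) := by
      simp [Matrix.one_apply]; split <;> simp
    rw [h1] at this
    exact_mod_cast this
  · ext i j
    simp only [Matrix.map_apply, Matrix.of_apply]
    exact (hre i j).symm
end
end

section
/- Let β = (β₁,β₂,β₃) be a real 3-vector with π/4 ≥ β₁ ≥ β₂ ≥ |β₃|. Then β + (π/2)(−1,0,0) s-majorizes β if and only if β₁ + |β₃| ≤ π/4. Moreover, if β₁ < π/4 then β does not s-majorize β + (π/2)(−1,0,0). -/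
open Matrix Complex Real NormedSpace

noncomputable section

/-- The s-ordered form of a real 3-vector: the absolute values rearranged in nonincreasing
order, with the third component carrying the sign of the product `v₀v₁v₂`. -/
def sOrd (v : Fin 3 → ℝ) : Fin 3 → ℝ :=
  ![max |v 0| (max |v 1| |v 2|),
    |v 0| + |v 1| + |v 2| - max |v 0| (max |v 1| |v 2|) - min |v 0| (min |v 1| |v 2|),
    if v 0 * v 1 * v 2 < 0 then -(min |v 0| (min |v 1| |v 2|))
    else min |v 0| (min |v 1| |v 2|)]

/-- `x` s-majorizes `y`, written for the s-ordered forms: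
`x^s₁ ≥ y^s₁`, `x^s₁+x^s₂−x^s₃ ≥ y^s₁+y^s₂−y^s₃` and `x^s₁+x^s₂+x^s₃ ≥ y^s₁+y^s₂+y^s₃`. -/
def sMaj (x y : Fin 3 → ℝ) : Prop :=
  sOrd y 0 ≤ sOrd x 0 ∧
    sOrd y 0 + sOrd y 1 - sOrd y 2 ≤ sOrd x 0 + sOrd x 1 - sOrd x 2 ∧
    sOrd y 0 + sOrd y 1 + sOrd y 2 ≤ sOrd x 0 + sOrd x 1 + sOrd x 2

/-!
With `π/4 ≥ β₁ ≥ β₂ ≥ |β₃|`, `β` is its own s-ordered form, and the shifted vector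
`(β₁ - π/2, β₂, β₃)` has s-ordered form `(π/2 - β₁, β₂, -β₃)`: flipping the sign of the
dominant entry flips the sign of the product. The three s-majorization inequalities then
reduce to `β₁ ≤ π/4` and `β₁ ± β₃ ≤ π/4`, while the reverse majorization would need
`π/2 - β₁ ≤ β₁`.
-/

lemma sOrd_eq_of_abs_le {v : Fin 3 → ℝ} (h12 : |v 2| ≤ |v 1|) (h01 : |v 1| ≤ |v 0|) :
    sOrd v = ![|v 0|, |v 1|, if v 0 * v 1 * v 2 < 0 then -|v 2| else |v 2|] := by
  have hmax : max |v 0| (max |v 1| |v 2|) = |v 0| := by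
    rw [max_eq_left h12, max_eq_left h01]
  have hmin : min |v 0| (min |v 1| |v 2|) = |v 2| := by
    rw [min_eq_right h12, min_eq_right (h12.trans h01)]
  ext i
  fin_cases i <;> simp [sOrd, hmax, hmin]; ring

lemma sOrd_eq_self {v : Fin 3 → ℝ} (h12 : |v 2| ≤ v 1) (h01 : v 1 ≤ v 0) : sOrd v = v := by
  have hv1 : 0 ≤ v 1 := (abs_nonneg _).trans h12
  have hv0 : 0 ≤ v 0 := hv1.trans h01
  rw [sOrd_eq_of_abs_le (by rwa [abs_of_nonneg hv1]) (by rwa [abs_of_nonneg hv1, abs_of_nonneg hv0]),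
    abs_of_nonneg hv1, abs_of_nonneg hv0]
  ext i
  fin_cases i
  · rfl
  · rfl
  · rcases lt_or_ge (v 2) 0 with hneg | hnonneg
    · have hv1pos : 0 < v 1 := (abs_pos.2 hneg.ne).trans_le h12
      have : v 0 * v 1 * v 2 < 0 :=
        mul_neg_of_pos_of_neg (mul_pos (hv1pos.trans_le h01) hv1pos) hneg
      simp [this, abs_of_neg hneg]
    · have : ¬ v 0 * v 1 * v 2 < 0 := not_lt.2 (by positivity)
      simp [this, abs_of_nonneg hnonneg]

lemma sOrd_eq_of_nonpos_head {v : Fin 3 → ℝ} (h12 : |v 2| ≤ v 1) (h01 : v 1 ≤ -v 0) :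
    sOrd v = ![-v 0, v 1, -v 2] := by
  have hv1 : 0 ≤ v 1 := (abs_nonneg _).trans h12
  have hv0 : v 0 ≤ 0 := by linarith
  rw [sOrd_eq_of_abs_le (by rwa [abs_of_nonneg hv1]) (by rwa [abs_of_nonneg hv1, abs_of_nonpos hv0]),
    abs_of_nonneg hv1, abs_of_nonpos hv0]
  ext i
  fin_cases i
  · rfl
  · rfl
  · rcases le_or_gt (v 2) 0 with hnonpos | hpos
    · have : ¬ v 0 * v 1 * v 2 < 0 :=
        not_lt.2 (mul_nonneg_of_nonpos_of_nonpos (mul_nonpos_of_nonpos_of_nonneg hv0 hv1) hnonpos)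
      simp [this, abs_of_nonpos hnonpos]
    · have hv1pos : 0 < v 1 := (abs_pos.2 hpos.ne').trans_le h12
      have hv0neg : v 0 < 0 := by linarith
      have : v 0 * v 1 * v 2 < 0 := mul_neg_of_neg_of_pos (mul_neg_of_neg_of_pos hv0neg hv1pos) hpos
      simp [this, abs_of_pos hpos]

theorem stmt10 (β : Fin 3 → ℝ)
    (hb0 : β 0 ≤ π / 4) (hb1 : β 1 ≤ β 0) (hb2 : |β 2| ≤ β 1) :
    (sMaj (fun i => β i + π / 2 * ((![-1, 0, 0] : Fin 3 → ℤ) i : ℝ)) β ↔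
      β 0 + |β 2| ≤ π / 4) ∧
    (β 0 < π / 4 →
      ¬ sMaj β (fun i => β i + π / 2 * ((![-1, 0, 0] : Fin 3 → ℤ) i : ℝ))) := by
  set γ : Fin 3 → ℝ := fun i => β i + π / 2 * ((![-1, 0, 0] : Fin 3 → ℤ) i : ℝ) with hγ
  have hγβ : γ = ![β 0 - π / 2, β 1, β 2] := by
    ext i
    fin_cases i <;> simp [hγ]; ring
  have hγ_ord : sOrd γ = ![π / 2 - β 0, β 1, -β 2] := by
    rw [hγβ, sOrd_eq_of_nonpos_head (by simpa using hb2) (by simp; linarith)]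
    simp
  have hβ_ord : sOrd β = β := sOrd_eq_self hb2 hb1
  simp only [sMaj, hγ_ord, hβ_ord, Matrix.cons_val_zero, Matrix.cons_val_one, Matrix.cons_val_two,
    Matrix.head_cons, Matrix.tail_cons]
  have h_abs : β 0 + |β 2| ≤ π / 4 ↔ -(π / 4 - β 0) ≤ β 2 ∧ β 2 ≤ π / 4 - β 0 := by
    rw [← abs_le]
    constructor <;> intro h <;> linarith
  rw [h_abs]
  refine ⟨⟨fun ⟨_, h₁, h₂⟩ => ⟨by linarith, by linarith⟩,
    fun ⟨h₁, h₂⟩ => ⟨by linarith, by linarith, by linarith⟩⟩, fun hlt ⟨h, _⟩ => by linarith⟩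
end
end

section
/- Let β = (β₁,β₂,β₃) and γ = (γ₁,γ₂,γ₃) be real 3-vectors each satisfying π/4 ≥ x₁ ≥ x₂ ≥ |x₃| and x₁ + |x₃| ≤ π/4. Then the following are equivalent: (i) for every real 3-vector α with α₁ ≥ α₂ ≥ |α₃| and α₁ > 0, inf{ t ≥ 0 : t·α ≻_s γ } ≤ inf{ t ≥ 0 : t·α ≻_s β }; (ii) β s-majorizes γ. (Partial order of non-locality: the gate with interaction content β is more non-local than the gate with interaction content γ, with respect to every interaction Hamiltonian, exactly when β ≻_s γ.) -/
open Matrix Complex Real NormedSpace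

noncomputable section

private lemma sOrd_eq (v : Fin 3 → ℝ) (h1 : v 1 ≤ v 0) (h2 : |v 2| ≤ v 1) :
    sOrd v = v := by
  have h2' : 0 ≤ v 1 := (abs_nonneg _).trans h2
  have h0' : 0 ≤ v 0 := h2'.trans h1
  have ha0 : |v 0| = v 0 := abs_of_nonneg h0'
  have ha1 : |v 1| = v 1 := abs_of_nonneg h2'
  have hmax : max |v 0| (max |v 1| |v 2|) = v 0 := by
    rw [ha1, ha0, max_eq_left h2, max_eq_left h1]
  have hmin : min |v 0| (min |v 1| |v 2|) = |v 2| := by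
    rw [ha1, ha0, min_eq_right h2, min_eq_right (h2.trans h1)]
  funext i
  fin_cases i
  · show max |v 0| (max |v 1| |v 2|) = v 0
    exact hmax
  · show |v 0| + |v 1| + |v 2| - max |v 0| (max |v 1| |v 2|) - min |v 0| (min |v 1| |v 2|) = v 1
    rw [hmax, hmin, ha0, ha1]; ring
  · show (if v 0 * v 1 * v 2 < 0 then -(min |v 0| (min |v 1| |v 2|))
        else min |v 0| (min |v 1| |v 2|)) = v 2
    rw [hmin]
    rcases le_or_gt 0 (v 2) with hp | hn
    · rw [if_neg (not_lt.mpr (mul_nonneg (mul_nonneg h0' h2') hp)), _root_.abs_of_nonneg hp]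
    · have habs : |v 2| = -v 2 := abs_of_neg hn
      have hv1 : 0 < v 1 := lt_of_lt_of_le (by linarith [habs ▸ h2]) h2
      have hv0 : 0 < v 0 := lt_of_lt_of_le hv1 h1
      rw [if_pos (mul_neg_of_pos_of_neg (mul_pos hv0 hv1) hn), habs, neg_neg]

private lemma setEq (x α : Fin 3 → ℝ) (hx1 : x 1 ≤ x 0) (hx2 : |x 2| ≤ x 1)
    (ha1 : α 1 ≤ α 0) (ha2 : |α 2| ≤ α 1) (ha0 : 0 < α 0) :
    {t : ℝ | 0 ≤ t ∧ sMaj (t • α) x} =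
      Set.Ici (max 0 (max (x 0 / α 0)
        (max ((x 0 + x 1 - x 2) / (α 0 + α 1 - α 2))
             ((x 0 + x 1 + x 2) / (α 0 + α 1 + α 2))))) := by
  have habs := abs_le.mp ha2
  have hB : 0 < α 0 + α 1 - α 2 := by linarith [habs.1, habs.2]
  have hC : 0 < α 0 + α 1 + α 2 := by linarith [habs.1, habs.2]
  have hxo := sOrd_eq x hx1 hx2
  have key : ∀ t : ℝ, 0 ≤ t → (sOrd (t • α) = t • α) := by
    intro t ht
    apply sOrd_eq
    · simp only [Pi.smul_apply, smul_eq_mul]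
      exact mul_le_mul_of_nonneg_left ha1 ht
    · simp only [Pi.smul_apply, smul_eq_mul, abs_mul, _root_.abs_of_nonneg ht]
      exact mul_le_mul_of_nonneg_left ha2 ht
  ext t
  simp only [Set.mem_setOf_eq, Set.mem_Ici, max_le_iff]
  constructor
  · rintro ⟨ht, hm⟩
    rw [sMaj, key t ht, hxo] at hm
    simp only [Pi.smul_apply, smul_eq_mul] at hm
    obtain ⟨m1, m2, m3⟩ := hm
    have e2 : t * (α 0 + α 1 - α 2) = t * α 0 + t * α 1 - t * α 2 := by ring
    have e3 : t * (α 0 + α 1 + α 2) = t * α 0 + t * α 1 + t * α 2 := by ring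
    exact ⟨ht, (div_le_iff₀ ha0).mpr (by linarith),
      (div_le_iff₀ hB).mpr (by linarith), (div_le_iff₀ hC).mpr (by linarith)⟩
  · rintro ⟨ht, r1, r2, r3⟩
    refine ⟨ht, ?_⟩
    rw [sMaj, key t ht, hxo]
    simp only [Pi.smul_apply, smul_eq_mul]
    have e1 := (div_le_iff₀ ha0).mp r1
    have e2 := (div_le_iff₀ hB).mp r2
    have e3 := (div_le_iff₀ hC).mp r3
    refine ⟨by linarith, by nlinarith [e2], by nlinarith [e3]⟩

theorem stmt11 (β γ : Fin 3 → ℝ)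
    (hb0 : β 0 ≤ π / 4) (hb1 : β 1 ≤ β 0) (hb2 : |β 2| ≤ β 1) (hb3 : β 0 + |β 2| ≤ π / 4)
    (hg0 : γ 0 ≤ π / 4) (hg1 : γ 1 ≤ γ 0) (hg2 : |γ 2| ≤ γ 1) (hg3 : γ 0 + |γ 2| ≤ π / 4) :
    ((∀ α : Fin 3 → ℝ, α 1 ≤ α 0 → |α 2| ≤ α 1 → 0 < α 0 →
        sInf { t : ℝ | 0 ≤ t ∧ sMaj (t • α) γ } ≤
          sInf { t : ℝ | 0 ≤ t ∧ sMaj (t • α) β }) ↔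
      sMaj β γ) := by
  have hb2' : 0 ≤ β 1 := (abs_nonneg _).trans hb2
  have hb0' : 0 ≤ β 0 := hb2'.trans hb1
  have hg2' : 0 ≤ γ 1 := (abs_nonneg _).trans hg2
  have hg0' : 0 ≤ γ 0 := hg2'.trans hg1
  have hbabs := abs_le.mp hb2
  have hgabs := abs_le.mp hg2
  have hsb := sOrd_eq β hb1 hb2
  have hsg := sOrd_eq γ hg1 hg2
  constructor
  · intro H
    rw [sMaj, hsb, hsg]
    rcases lt_or_ge 0 (β 0) with hbpos | hbz
    · have hB : 0 < β 0 + β 1 - β 2 := by linarith [hbabs.1, hbabs.2]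
      have hC : 0 < β 0 + β 1 + β 2 := by linarith [hbabs.1, hbabs.2]
      have h := H β hb1 hb2 hbpos
      rw [setEq γ β hg1 hg2 hb1 hb2 hbpos, setEq β β hb1 hb2 hb1 hb2 hbpos,
        csInf_Ici, csInf_Ici, div_self hbpos.ne', div_self hB.ne', div_self hC.ne'] at h
      have h1 : max 0 (max (γ 0 / β 0)
          (max ((γ 0 + γ 1 - γ 2) / (β 0 + β 1 - β 2))
               ((γ 0 + γ 1 + γ 2) / (β 0 + β 1 + β 2)))) ≤ 1 := by
        calc _ ≤ max 0 (max 1 (max 1 1)) := h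
        _ = 1 := by norm_num
      have r1 : γ 0 / β 0 ≤ 1 :=
        le_trans (le_max_of_le_right (le_max_left _ _)) h1
      have r2 : (γ 0 + γ 1 - γ 2) / (β 0 + β 1 - β 2) ≤ 1 :=
        le_trans (le_max_of_le_right (le_max_of_le_right (le_max_left _ _))) h1
      have r3 : (γ 0 + γ 1 + γ 2) / (β 0 + β 1 + β 2) ≤ 1 :=
        le_trans (le_max_of_le_right (le_max_of_le_right (le_max_right _ _))) h1
      exact ⟨(div_le_one hbpos).mp r1, (div_le_one hB).mp r2, (div_le_one hC).mp r3⟩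
    · have hb00 : β 0 = 0 := le_antisymm hbz hb0'
      have hb10 : β 1 = 0 := le_antisymm (hb1.trans hbz) hb2'
      have hb20 : β 2 = 0 := abs_eq_zero.mp (le_antisymm (hb10 ▸ hb2) (abs_nonneg _))
      have e0 : (![1,1,0] : Fin 3 → ℝ) 0 = 1 := rfl
      have e1 : (![1,1,0] : Fin 3 → ℝ) 1 = 1 := rfl
      have e2 : (![1,1,0] : Fin 3 → ℝ) 2 = 0 := rfl
      have h := H ![1,1,0] (by rw [e0, e1]) (by rw [e1, e2]; norm_num) (by rw [e0]; norm_num)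
      rw [setEq γ _ hg1 hg2 (by rw [e0, e1]) (by rw [e1, e2]; norm_num) (by rw [e0]; norm_num),
        setEq β _ hb1 hb2 (by rw [e0, e1]) (by rw [e1, e2]; norm_num) (by rw [e0]; norm_num),
        csInf_Ici, csInf_Ici, e0, e1, e2, hb00, hb10, hb20] at h
      norm_num at h
      obtain ⟨r1, r2, r3⟩ := h
      rw [hb00, hb10, hb20]
      norm_num
      exact ⟨r1, by linarith, by linarith⟩
  · intro hm α ha1 ha2 ha0
    rw [sMaj, hsb, hsg] at hm
    obtain ⟨m1, m2, m3⟩ := hm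
    have haabs := abs_le.mp ha2
    have hB : 0 < α 0 + α 1 - α 2 := by linarith [haabs.1, haabs.2]
    have hC : 0 < α 0 + α 1 + α 2 := by linarith [haabs.1, haabs.2]
    rw [setEq γ α hg1 hg2 ha1 ha2 ha0, setEq β α hb1 hb2 ha1 ha2 ha0, csInf_Ici, csInf_Ici]
    have d1 : γ 0 / α 0 ≤ β 0 / α 0 := by gcongr
    have d2 : (γ 0 + γ 1 - γ 2) / (α 0 + α 1 - α 2) ≤
        (β 0 + β 1 - β 2) / (α 0 + α 1 - α 2) := by gcongr
    have d3 : (γ 0 + γ 1 + γ 2) / (α 0 + α 1 + α 2) ≤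
        (β 0 + β 1 + β 2) / (α 0 + α 1 + α 2) := by gcongr
    apply max_le (le_max_left _ _)
    apply max_le (le_max_of_le_right (d1.trans (le_max_left _ _)))
    apply max_le
    · exact le_max_of_le_right (le_max_of_le_right (d2.trans (le_max_left _ _)))
    · exact le_max_of_le_right (le_max_of_le_right (d3.trans (le_max_right _ _)))
end
end

section
/- Let α = (α₁,α₂,α₃) be a real 3-vector with α₁ ≥ α₂ ≥ |α₃| and α₁ > 0, and let x ≥ 0. Then inf{ t ≥ 0 : t·α ≻_s (x,0,0) } = x/α₁, and the infimum is attained. (Interaction cost of a controlled-U gate with interaction content (x,0,0); for x = π/4 this is the interaction cost π/(4α₁) of the CNOT gate.) -/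
open Matrix Complex Real NormedSpace

noncomputable section

/-!
For `t ≥ 0` both `t • α` and `(x, 0, 0)` are already s-ordered, so `sOrd` fixes them and
s-majorization becomes three linear inequalities. Since `α₂ ± α₃ ≥ 0`, only `t α₁ ≥ x` binds,
and the least admissible `t` is `x / α₁`.
-/

def SOrdered (v : Fin 3 → ℝ) : Prop :=
  v 1 ≤ v 0 ∧ |v 2| ≤ v 1

namespace SOrdered

variable {v : Fin 3 → ℝ}

theorem sOrd_eq (hv : SOrdered v) : sOrd v = v := by
  obtain ⟨h01, h12⟩ := hv
  have hv1 : 0 ≤ v 1 := (abs_nonneg _).trans h12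
  have hmax : max |v 0| (max |v 1| |v 2|) = v 0 := by
    rw [abs_of_nonneg hv1, abs_of_nonneg (hv1.trans h01)]
    simp [h01, h12]
  have hmin : min |v 0| (min |v 1| |v 2|) = |v 2| := by
    rw [abs_of_nonneg hv1, abs_of_nonneg (hv1.trans h01)]
    simp [h12.trans h01, h12]
  -- a negative `v 2` forces `v 1 > 0`, so the product has the sign of `v 2`
  have hsign : v 0 * v 1 * v 2 < 0 ↔ v 2 < 0 := by
    constructor
    · intro h
      by_contra! h2
      exact h.not_ge (mul_nonneg (mul_nonneg (hv1.trans h01) hv1) h2)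
    · intro h2
      have hv1pos : 0 < v 1 := (abs_pos.mpr h2.ne).trans_le h12
      exact mul_neg_of_pos_of_neg (mul_pos (hv1pos.trans_le h01) hv1pos) h2
  ext i
  fin_cases i
  · exact hmax
  · change |v 0| + |v 1| + |v 2| - max |v 0| (max |v 1| |v 2|) - min |v 0| (min |v 1| |v 2|) = v 1
    rw [hmax, hmin, abs_of_nonneg hv1, abs_of_nonneg (hv1.trans h01)]
    ring
  · change (if v 0 * v 1 * v 2 < 0 then -min |v 0| (min |v 1| |v 2|)
      else min |v 0| (min |v 1| |v 2|)) = v 2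
    rw [hmin]
    split_ifs with h2 <;> rw [hsign] at h2
    · rw [abs_of_neg h2, neg_neg]
    · exact abs_of_nonneg (not_lt.mp h2)

theorem smul (hv : SOrdered v) {t : ℝ} (ht : 0 ≤ t) : SOrdered (t • v) := by
  obtain ⟨h01, h12⟩ := hv
  simp only [SOrdered, Pi.smul_apply, smul_eq_mul, abs_mul, abs_of_nonneg ht]
  exact ⟨mul_le_mul_of_nonneg_left h01 ht, mul_le_mul_of_nonneg_left h12 ht⟩

end SOrdered

theorem sOrdered_single {x : ℝ} (hx : 0 ≤ x) : SOrdered ![x, 0, 0] := by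
  simp [SOrdered, hx]

theorem sMaj_iff_of_sOrdered {u w : Fin 3 → ℝ} (hu : SOrdered u) (hw : SOrdered w) :
    sMaj u w ↔ w 0 ≤ u 0 ∧ w 0 + w 1 - w 2 ≤ u 0 + u 1 - u 2 ∧
      w 0 + w 1 + w 2 ≤ u 0 + u 1 + u 2 := by
  rw [sMaj, hu.sOrd_eq, hw.sOrd_eq]

theorem sMaj_single_iff {v : Fin 3 → ℝ} (hv : SOrdered v) {x : ℝ} (hx : 0 ≤ x) :
    sMaj v ![x, 0, 0] ↔ x ≤ v 0 := by
  rw [sMaj_iff_of_sOrdered hv (sOrdered_single hx)]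
  obtain ⟨h2lo, h2hi⟩ := abs_le.mp hv.2
  simp only [Matrix.cons_val_zero, Matrix.cons_val_one, Matrix.cons_val_two, Matrix.head_cons,
    Matrix.tail_cons]
  constructor
  · exact fun h => h.1
  · intro h
    exact ⟨h, by linarith, by linarith⟩

theorem stmt12 (α : Fin 3 → ℝ)
    (ha1 : α 1 ≤ α 0) (ha2 : |α 2| ≤ α 1) (ha0 : 0 < α 0) (x : ℝ) (hx : 0 ≤ x) :
    IsLeast { t : ℝ | 0 ≤ t ∧ sMaj (t • α) ![x, 0, 0] } (x / α 0) := by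
  have hα : SOrdered α := ⟨ha1, ha2⟩
  have hmaj : ∀ t : ℝ, 0 ≤ t → (sMaj (t • α) ![x, 0, 0] ↔ x / α 0 ≤ t) := by
    intro t ht
    rw [sMaj_single_iff (hα.smul ht) hx, div_le_iff₀ ha0, Pi.smul_apply, smul_eq_mul]
  have hx0 : 0 ≤ x / α 0 := div_nonneg hx ha0.le
  exact ⟨⟨hx0, (hmaj _ hx0).mpr le_rfl⟩, fun t ⟨ht, h⟩ => (hmaj t ht).mp h⟩
end
end

section
/- Let α = (α₁,α₂,α₃) be a real 3-vector with α₁ ≥ α₂ ≥ |α₃| and α₁ > 0. Then inf{ t ≥ 0 : t·α ≻_s (π/4, π/4, 0) } = (π/2)/(α₁ + α₂ − |α₃|), and the infimum is attained. (Interaction cost of the DCNOT gate, whose interaction content is (π/4, π/4, 0).) -/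
open Matrix Complex Real NormedSpace

noncomputable section

/-!
An s-ordered vector is its own s-ordered form, and nonnegative scaling preserves s-ordering.
Hence for `t ≥ 0` the relation `t • α ≻ₛ (π/4, π/4, 0)` is the conjunction of the linear
inequalities `π/4 ≤ t α₁`, `π/2 ≤ t (α₁ + α₂ - α₃)` and `π/2 ≤ t (α₁ + α₂ + α₃)`, which together
amount to the single one `π/2 ≤ t (α₁ + α₂ - |α₃|)`.
-/

def IsSOrdered (v : Fin 3 → ℝ) : Prop :=
  v 1 ≤ v 0 ∧ |v 2| ≤ v 1

theorem IsSOrdered.smul {v : Fin 3 → ℝ} (hv : IsSOrdered v) {t : ℝ} (ht : 0 ≤ t) :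
    IsSOrdered (t • v) := by
  obtain ⟨h10, h21⟩ := hv
  refine ⟨?_, ?_⟩
  · simpa only [Pi.smul_apply, smul_eq_mul] using mul_le_mul_of_nonneg_left h10 ht
  · simpa only [Pi.smul_apply, smul_eq_mul, abs_mul, abs_of_nonneg ht] using
      mul_le_mul_of_nonneg_left h21 ht

theorem sOrd_eq_self_of_isSOrdered {v : Fin 3 → ℝ} (hv : IsSOrdered v) : sOrd v = v := by
  obtain ⟨h10, h21⟩ := hv
  have h1 : 0 ≤ v 1 := (abs_nonneg _).trans h21
  have hmax : max |v 0| (max |v 1| |v 2|) = v 0 := by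
    rw [abs_of_nonneg h1, abs_of_nonneg (h1.trans h10), max_eq_left h21, max_eq_left h10]
  have hmin : min |v 0| (min |v 1| |v 2|) = |v 2| := by
    rw [abs_of_nonneg h1, abs_of_nonneg (h1.trans h10), min_eq_right h21,
      min_eq_right (h21.trans h10)]
  have hsign : (if v 0 * v 1 * v 2 < 0 then -|v 2| else |v 2|) = v 2 := by
    split_ifs with hneg
    · have : v 2 < 0 := by
        by_contra! h2
        exact hneg.not_ge (mul_nonneg (mul_nonneg (h1.trans h10) h1) h2)
      exact abs_of_neg this ▸ neg_neg _
    · refine abs_of_nonneg (not_lt.mp fun h2 => hneg ?_)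
      have h1pos : 0 < v 1 := (abs_pos.mpr h2.ne).trans_le h21
      exact mul_neg_of_pos_of_neg (mul_pos (h1pos.trans_le h10) h1pos) h2
  ext i
  fin_cases i
  · simpa [sOrd] using hmax
  · simp only [sOrd, Fin.mk_one, Matrix.cons_val_one, Matrix.cons_val_zero]
    rw [hmax, hmin, abs_of_nonneg h1, abs_of_nonneg (h1.trans h10)]
    ring
  · simpa [sOrd, hmin] using hsign

theorem sMaj_iff_of_isSOrdered {x y : Fin 3 → ℝ} (hx : IsSOrdered x) (hy : IsSOrdered y) :
    sMaj x y ↔ y 0 ≤ x 0 ∧ y 0 + y 1 - y 2 ≤ x 0 + x 1 - x 2 ∧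
      y 0 + y 1 + y 2 ≤ x 0 + x 1 + x 2 := by
  rw [sMaj, sOrd_eq_self_of_isSOrdered hx, sOrd_eq_self_of_isSOrdered hy]

theorem sMaj_diag_iff {x : Fin 3 → ℝ} (hx : IsSOrdered x) {c : ℝ} (hc : 0 ≤ c) :
    sMaj x ![c, c, 0] ↔ 2 * c ≤ x 0 + x 1 - |x 2| := by
  have hdiag : IsSOrdered ![c, c, 0] := ⟨le_rfl, by simpa using hc⟩
  rw [sMaj_iff_of_isSOrdered hx hdiag]
  simp only [Matrix.cons_val_zero, Matrix.cons_val_one, Matrix.cons_val_two, Matrix.tail_cons,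
    Matrix.head_cons, add_zero, sub_zero]
  obtain ⟨h10, h21⟩ := hx
  constructor
  · rintro ⟨-, hminus, hplus⟩
    rcases abs_cases (x 2) with ⟨habs, -⟩ | ⟨habs, -⟩ <;> rw [habs] <;> linarith
  · intro h
    refine ⟨by linarith [abs_nonneg (x 2)], ?_, ?_⟩ <;>
      linarith [le_abs_self (x 2), neg_abs_le (x 2)]

theorem isLeast_setOf_le_mul {a d : ℝ} (ha : 0 ≤ a) (hd : 0 < d) :
    IsLeast {t : ℝ | 0 ≤ t ∧ a ≤ t * d} (a / d) :=
  ⟨⟨div_nonneg ha hd.le, (div_mul_cancel₀ a hd.ne').ge⟩,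
    fun _ ⟨_, ht⟩ => (div_le_iff₀ hd).mpr ht⟩

theorem stmt13 (α : Fin 3 → ℝ)
    (ha1 : α 1 ≤ α 0) (ha2 : |α 2| ≤ α 1) (ha0 : 0 < α 0) :
    IsLeast { t : ℝ | 0 ≤ t ∧ sMaj (t • α) ![π / 4, π / 4, 0] }
      (π / 2 / (α 0 + α 1 - |α 2|)) := by
  have hα : IsSOrdered α := ⟨ha1, ha2⟩
  have hd : 0 < α 0 + α 1 - |α 2| := by linarith
  have hset : { t : ℝ | 0 ≤ t ∧ sMaj (t • α) ![π / 4, π / 4, 0] } =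
      { t : ℝ | 0 ≤ t ∧ π / 2 ≤ t * (α 0 + α 1 - |α 2|) } := by
    ext t
    refine and_congr_right fun ht => ?_
    rw [sMaj_diag_iff (hα.smul ht) (by positivity)]
    simp only [Pi.smul_apply, smul_eq_mul, abs_mul, abs_of_nonneg ht]
    rw [← mul_add, ← mul_sub, show 2 * (π / 4) = π / 2 by ring]
  rw [hset]
  exact isLeast_setOf_le_mul (by positivity) hd
end
end

section
/- Let α = (α₁,α₂,α₃) be a real 3-vector with π/4 ≥ α₁ ≥ α₂ ≥ |α₃| and α₁ > 0. Then the minimum over b ∈ [−1/2, 1/2] of max{ π/(4α₁), (π/2)(1−b)/(α₁+α₂−α₃), (π/2)(1+b)/(α₁+α₂+α₃) } equals (π/2)/(α₁+α₂), and this minimum is attained at b = α₃/(α₁+α₂). (This linear optimization gives the optimal interaction cost (π/2)/(α₁+α₂) for the simultaneous bidirectional transmission of classical bits, achieved by simulating the gate with interaction content (π/4, π/4, (π/2)·α₃/(α₁+α₂)).) -/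
open Matrix Complex Real NormedSpace

noncomputable section

/-- The maximum of the three simulation-time constraints, as a function of `b`. -/
def costFn (α : Fin 3 → ℝ) (b : ℝ) : ℝ :=
  max (π / (4 * α 0))
    (max (π / 2 * (1 - b) / (α 0 + α 1 - α 2)) (π / 2 * (1 + b) / (α 0 + α 1 + α 2)))

theorem stmt19 (α : Fin 3 → ℝ)
    (ha0 : α 0 ≤ π / 4) (ha1 : α 1 ≤ α 0) (ha2 : |α 2| ≤ α 1) (hpos : 0 < α 0) :
    α 2 / (α 0 + α 1) ∈ Set.Icc (-(1 / 2) : ℝ) (1 / 2) ∧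
    IsLeast (costFn α '' Set.Icc (-(1 / 2) : ℝ) (1 / 2)) (π / 2 / (α 0 + α 1)) ∧
    costFn α (α 2 / (α 0 + α 1)) = π / 2 / (α 0 + α 1) := by

  have habs := abs_le.mp ha2
  have hπ : (0:ℝ) < π := Real.pi_pos
  have h1nn : 0 ≤ α 1 := le_trans (abs_nonneg _) ha2
  have hs : 0 < α 0 + α 1 := by linarith
  have h2 : 0 < α 0 + α 1 - α 2 := by linarith
  have h3 : 0 < α 0 + α 1 + α 2 := by linarith
  have hbmem : α 2 / (α 0 + α 1) ∈ Set.Icc (-(1 / 2) : ℝ) (1 / 2) := by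
    constructor
    · rw [le_div_iff₀ hs]; linarith
    · rw [div_le_iff₀ hs]; linarith
  have hval : costFn α (α 2 / (α 0 + α 1)) = π / 2 / (α 0 + α 1) := by
    unfold costFn
    have e2 : π / 2 * (1 - α 2 / (α 0 + α 1)) / (α 0 + α 1 - α 2)
        = π / 2 / (α 0 + α 1) := by
      rw [div_eq_div_iff h2.ne' hs.ne']; field_simp
    have e3 : π / 2 * (1 + α 2 / (α 0 + α 1)) / (α 0 + α 1 + α 2)
        = π / 2 / (α 0 + α 1) := by
      rw [div_eq_div_iff h3.ne' hs.ne']; field_simp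
    rw [e2, e3, max_self]
    refine max_eq_right ?_
    rw [div_div, div_le_div_iff₀ (by positivity) (by positivity)]
    nlinarith
  refine ⟨hbmem, ⟨⟨α 2 / (α 0 + α 1), hbmem, hval⟩, ?_⟩, hval⟩
  rintro y ⟨b, hb, rfl⟩
  have key : π / 2 / (α 0 + α 1) ≤
      max (π / 2 * (1 - b) / (α 0 + α 1 - α 2)) (π / 2 * (1 + b) / (α 0 + α 1 + α 2)) := by
    by_contra h
    push_neg at h
    obtain ⟨hA, hB⟩ := max_lt_iff.mp h
    rw [div_lt_div_iff₀ h2 hs] at hA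
    rw [div_lt_div_iff₀ h3 hs] at hB
    nlinarith
  exact le_trans key (le_max_right _ _)
end
end
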